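/- arXiv:2301.03131 — 3 statements merged into one kernel-verified Lean document; each statement's English description precedes it below -/
import Mathlib

section
/- Let r ≥ 2 and n ≥ 2, let T be a finite set and let x, y be two distinct elements not in T. Then the two composite stabilization maps rConf(T, ℝⁿ) → rConf(T ∪ {x, y}, ℝⁿ) — namely, first adding x and then adding y, versus first adding y and then adding x — are homotopic as continuous maps. -/
/-- An `r`-configuration: a tuple of points with no `r`-element subset of the index set
on which the function is constant. -/
def IsRConf (r : ℕ) {n : ℕ} {β : Type*} (f : β → Fin n → ℝ) : Prop :=
  ¬∃ B : Finset β, B.card = r ∧ ∀ i ∈ B, ∀ j ∈ B, f i = f j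

/-- The no-`r`-equal configuration space of points of `ℝⁿ` labelled by a finite set `T`. -/
abbrev RConf {α : Type*} (r n : ℕ) (T : Finset α) : Type _ :=
  {f : ↥T → Fin n → ℝ // IsRConf r f}

/-- Extend a configuration labelled by `T` to one labelled by `insert x T`, placing the new
point at `(M + 1, 0, …, 0)` where `M` is the maximum of the first coordinates of the
existing points (`M = 0` if `T = ∅`). -/
noncomputable def stabExt {α : Type*} [DecidableEq α] (n : ℕ) (T : Finset α) (x : α)
    (f : ↥T → Fin n → ℝ) : ↥(insert x T) → Fin n → ℝ :=
  fun t => if h : (t : α) ∈ T then f ⟨t, h⟩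
    else fun i => if (i : ℕ) = 0 then (⨆ s : ↥T, f s i) + 1 else 0

/-- The homotopy between the two double-stabilization maps: at time `t` the two new points
rotate around the circle of radius `1/2` centred at `(M + 3/2, 0, …, 0)`. -/
noncomputable def homF {α : Type*} [DecidableEq α] (n : ℕ) (T : Finset α) (x y : α)
    (t : ℝ) (f : ↥T → Fin n → ℝ) : ↥(insert y (insert x T)) → Fin n → ℝ :=
  fun s i =>
    if h : (s : α) ∈ T then f ⟨s, h⟩ i
    else if (s : α) = x then
      (if (i : ℕ) = 0 then (⨆ u : ↥T, f u i) + 3 / 2 - Real.cos (t * Real.pi) / 2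
       else if (i : ℕ) = 1 then -(Real.sin (t * Real.pi) / 2) else 0)
    else
      (if (i : ℕ) = 0 then (⨆ u : ↥T, f u i) + 3 / 2 + Real.cos (t * Real.pi) / 2
       else if (i : ℕ) = 1 then Real.sin (t * Real.pi) / 2 else 0)

lemma cont_iSup {α : Type*} (T : Finset α) (n : ℕ) (i : Fin n) :
    Continuous fun f : ↥T → Fin n → ℝ => ⨆ u : ↥T, f u i := by
  rcases isEmpty_or_nonempty ↥T with h | h
  · have : (fun f : ↥T → Fin n → ℝ => ⨆ u : ↥T, f u i) = fun _ => 0 := by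
      funext f; rw [iSup, Set.range_eq_empty, Real.sSup_empty]
    rw [this]; exact continuous_const
  · have : (fun f : ↥T → Fin n → ℝ => ⨆ u : ↥T, f u i)
        = fun f => Finset.univ.sup' Finset.univ_nonempty (fun u : ↥T => f u i) := by
      funext f; exact (Finset.sup'_univ_eq_ciSup _).symm
    rw [this]
    exact Continuous.finset_sup'_apply Finset.univ_nonempty
      (fun u _ => (continuous_apply i).comp (continuous_apply u))

lemma le_Msup {α : Type*} {T : Finset α} {n : ℕ} (f : ↥T → Fin n → ℝ) (i : Fin n)
    (u : ↥T) : f u i ≤ ⨆ v : ↥T, f v i :=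
  le_ciSup (Set.Finite.bddAbove (Set.finite_range fun v : ↥T => f v i)) u

lemma sup_stabExt {α : Type*} [DecidableEq α] (n : ℕ) (T : Finset α) (z : α) (hz : z ∉ T)
    (f : ↥T → Fin n → ℝ) (i : Fin n) (hi : (i : ℕ) = 0) :
    (⨆ s : ↥(insert z T), stabExt n T z f s i) = (⨆ s : ↥T, f s i) + 1 := by
  have hne : Nonempty ↥(insert z T) := ⟨⟨z, Finset.mem_insert_self z T⟩⟩
  apply le_antisymm
  · apply ciSup_le
    intro s
    by_cases h : (s : α) ∈ T
    · rw [stabExt, dif_pos h]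
      have := le_Msup f i ⟨s, h⟩
      linarith
    · rw [stabExt, dif_neg h, if_pos hi]
  · have h1 : stabExt n T z f ⟨z, Finset.mem_insert_self z T⟩ i
        = (⨆ s : ↥T, f s i) + 1 := by
      rw [stabExt, dif_neg hz, if_pos hi]
    calc (⨆ s : ↥T, f s i) + 1 = stabExt n T z f ⟨z, Finset.mem_insert_self z T⟩ i :=
          h1.symm
      _ ≤ _ := le_Msup _ i _

lemma homF_isRConf {α : Type*} [DecidableEq α] {r n : ℕ} (hr : 2 ≤ r) (hn : 2 ≤ n)
    {T : Finset α} {x y : α} (hxy : x ≠ y) (hx : x ∉ T) (hy : y ∉ T)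
    (t : ℝ) (f : ↥T → Fin n → ℝ) (hf : IsRConf r f) :
    IsRConf r (homF n T x y t f) := by
  set i0 : Fin n := ⟨0, by omega⟩ with hi0
  set i1 : Fin n := ⟨1, by omega⟩ with hi1
  set M : ℝ := ⨆ u : ↥T, f u i0 with hM
  set c : ℝ := Real.cos (t * Real.pi) with hc
  set sn : ℝ := Real.sin (t * Real.pi) with hsn
  have hvT : ∀ a : ↥(insert y (insert x T)) , ∀ h : (a : α) ∈ T,
      homF n T x y t f a = f ⟨a, h⟩ := by
    intro a h; funext i; rw [homF, dif_pos h]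
  have hvx : ∀ a : ↥(insert y (insert x T)), (a : α) = x →
      homF n T x y t f a i0 = M + 3 / 2 - c / 2 ∧
      homF n T x y t f a i1 = -(sn / 2) := by
    intro a ha
    constructor
    · rw [homF, dif_neg (by rw [ha]; exact hx), if_pos ha, if_pos rfl]
    · rw [homF, dif_neg (by rw [ha]; exact hx), if_pos ha, if_neg (by simp [hi1]),
        if_pos rfl]
  have hvy : ∀ a : ↥(insert y (insert x T)), (a : α) = y →
      homF n T x y t f a i0 = M + 3 / 2 + c / 2 ∧
      homF n T x y t f a i1 = sn / 2 := by
    intro a ha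
    have hnT : ¬ (a : α) ∈ T := by rw [ha]; exact hy
    have hnx : ¬ (a : α) = x := by rw [ha]; exact fun h => hxy h.symm
    constructor
    · rw [homF, dif_neg hnT, if_neg hnx, if_pos rfl]
    · rw [homF, dif_neg hnT, if_neg hnx, if_neg (by simp [hi1]), if_pos rfl]
  have hc1 : c ≤ 1 := Real.cos_le_one _
  have hc2 : -1 ≤ c := Real.neg_one_le_cos _
  -- x-point differs from every T-point
  have hne_xT : ∀ a b : ↥(insert y (insert x T)), (a : α) = x → (b : α) ∈ T →
      homF n T x y t f a ≠ homF n T x y t f b := by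
    intro a b ha hb heq
    have h1 := (hvx a ha).1
    have h2 : homF n T x y t f b i0 = f ⟨b, hb⟩ i0 := by rw [hvT b hb]
    have h3 : f ⟨b, hb⟩ i0 ≤ M := le_Msup f i0 _
    rw [heq, h2] at h1
    linarith
  have hne_yT : ∀ a b : ↥(insert y (insert x T)), (a : α) = y → (b : α) ∈ T →
      homF n T x y t f a ≠ homF n T x y t f b := by
    intro a b ha hb heq
    have h1 := (hvy a ha).1
    have h2 : homF n T x y t f b i0 = f ⟨b, hb⟩ i0 := by rw [hvT b hb]
    have h3 : f ⟨b, hb⟩ i0 ≤ M := le_Msup f i0 _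
    rw [heq, h2] at h1
    linarith
  have hne_xy : ∀ a b : ↥(insert y (insert x T)), (a : α) = x → (b : α) = y →
      homF n T x y t f a ≠ homF n T x y t f b := by
    intro a b ha hb heq
    by_cases hc0 : c = 0
    · have hs0 : sn ≠ 0 := by
        intro h
        have := Real.sin_sq_add_cos_sq (t * Real.pi)
        rw [← hc, ← hsn, hc0, h] at this
        norm_num at this
      have h1 := (hvx a ha).2
      have h2 := (hvy b hb).2
      rw [heq, h2] at h1
      apply hs0; linarith
    · have h1 := (hvx a ha).1
      have h2 := (hvy b hb).1
      rw [heq, h2] at h1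
      apply hc0; linarith
  rintro ⟨B, hcard, hconst⟩
  have claim : ∀ b ∈ B, (b : α) ∈ T := by
    intro b hb
    by_contra hbT
    have hb2 : (b : α) = x ∨ (b : α) = y := by
      have := b.2
      simp only [Finset.mem_insert] at this
      tauto
    obtain ⟨d, hd, hdb⟩ := Finset.exists_mem_ne (show 1 < B.card by omega) b
    have heq := hconst b hb d hd
    have hd2 : (d : α) ∈ T ∨ (d : α) = x ∨ (d : α) = y := by
      have := d.2
      simp only [Finset.mem_insert] at this
      tauto
    rcases hb2 with hbx | hby
    · rcases hd2 with h | h | h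
      · exact hne_xT b d hbx h heq
      · exact hdb (Subtype.ext (h.trans hbx.symm))
      · exact hne_xy b d hbx h heq
    · rcases hd2 with h | h | h
      · exact hne_yT b d hby h heq
      · exact hne_xy d b h hby heq.symm
      · exact hdb (Subtype.ext (h.trans hby.symm))
  apply hf
  refine ⟨B.attach.map ⟨fun b => (⟨((b.1 : ↥(insert y (insert x T))) : α), claim b.1 b.2⟩ : ↥T),
      fun a b h => by
        simp only [Subtype.mk.injEq] at h; exact Subtype.ext (Subtype.ext h)⟩, ?_, ?_⟩
  · rw [Finset.card_map, Finset.card_attach, hcard]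
  · intro i hi j hj
    rw [Finset.mem_map] at hi hj
    obtain ⟨a, -, rfl⟩ := hi
    obtain ⟨b, -, rfl⟩ := hj
    show f ⟨_, claim a.1 a.2⟩ = f ⟨_, claim b.1 b.2⟩
    rw [← hvT a.1 (claim a.1 a.2), ← hvT b.1 (claim b.1 b.2)]
    exact hconst a.1 a.2 b.1 b.2

lemma homF_zero {α : Type*} [DecidableEq α] (n : ℕ) (T : Finset α) (x y : α)
    (hxy : x ≠ y) (hx : x ∉ T) (hy : y ∉ T) (f : ↥T → Fin n → ℝ)
    (s : ↥(insert y (insert x T))) :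
    homF n T x y 0 f s = stabExt n (insert x T) y (stabExt n T x f) s := by
  funext i
  by_cases h : (s : α) ∈ T
  · rw [homF, dif_pos h, stabExt,
      dif_pos (Finset.mem_insert_of_mem h : (s : α) ∈ insert x T), stabExt, dif_pos h]
  · by_cases hsx : (s : α) = x
    · have hmem : (s : α) ∈ insert x T := by rw [hsx]; exact Finset.mem_insert_self x T
      rw [homF, dif_neg h, if_pos hsx, stabExt, dif_pos hmem, stabExt, dif_neg h]
      simp only [zero_mul, Real.cos_zero, Real.sin_zero]
      split_ifs <;> ring
    · have hsy : (s : α) = y := by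
        have := s.2; simp only [Finset.mem_insert] at this; tauto
      have hnot : (s : α) ∉ insert x T := by
        rw [Finset.mem_insert]; push_neg; exact ⟨hsx, h⟩
      rw [homF, dif_neg h, if_neg hsx, stabExt, dif_neg hnot]
      simp only [zero_mul, Real.cos_zero, Real.sin_zero]
      by_cases hi : (i : ℕ) = 0
      · rw [if_pos hi, if_pos hi, sup_stabExt n T x hx f i hi]; ring
      · rw [if_neg hi, if_neg hi]; split_ifs <;> norm_num

lemma homF_one {α : Type*} [DecidableEq α] (n : ℕ) (T : Finset α) (x y : α)
    (hxy : x ≠ y) (hx : x ∉ T) (hy : y ∉ T) (f : ↥T → Fin n → ℝ)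
    (s : ↥(insert y (insert x T))) (hmem : (s : α) ∈ insert x (insert y T)) :
    homF n T x y 1 f s = stabExt n (insert y T) x (stabExt n T y f) ⟨s, hmem⟩ := by
  funext i
  by_cases h : (s : α) ∈ T
  · rw [homF, dif_pos h, stabExt,
      dif_pos (Finset.mem_insert_of_mem h : (s : α) ∈ insert y T), stabExt, dif_pos h]
  · by_cases hsx : (s : α) = x
    · have hnot : (s : α) ∉ insert y T := by
        rw [Finset.mem_insert]; push_neg; exact ⟨by rw [hsx]; exact hxy, h⟩
      rw [homF, dif_neg h, if_pos hsx, stabExt, dif_neg hnot]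
      simp only [one_mul, Real.cos_pi, Real.sin_pi]
      by_cases hi : (i : ℕ) = 0
      · rw [if_pos hi, if_pos hi, sup_stabExt n T y hy f i hi]; ring
      · rw [if_neg hi, if_neg hi]; split_ifs <;> norm_num
    · have hsy : (s : α) = y := by
        have := s.2; simp only [Finset.mem_insert] at this; tauto
      have hmem2 : (s : α) ∈ insert y T := by rw [hsy]; exact Finset.mem_insert_self y T
      rw [homF, dif_neg h, if_neg hsx, stabExt, dif_pos hmem2, stabExt, dif_neg h]
      simp only [one_mul, Real.cos_pi, Real.sin_pi]
      split_ifs <;> ring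

lemma homF_continuous {α : Type*} [DecidableEq α] (n : ℕ) (T : Finset α) (x y : α)
    {X : Type*} [TopologicalSpace X] {τ : X → ℝ} {φ : X → (↥T → Fin n → ℝ)}
    (hτ : Continuous τ) (hφ : Continuous φ) :
    Continuous fun p : X => homF n T x y (τ p) (φ p) := by
  apply continuous_pi; intro s
  apply continuous_pi; intro i
  have hM : Continuous fun p : X => ⨆ u : ↥T, φ p u i :=
    (cont_iSup T n i).comp hφ
  have hcos : Continuous fun p : X => Real.cos (τ p * Real.pi) :=
    Real.continuous_cos.comp (hτ.mul continuous_const)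
  have hsin : Continuous fun p : X => Real.sin (τ p * Real.pi) :=
    Real.continuous_sin.comp (hτ.mul continuous_const)
  by_cases h : (s : α) ∈ T
  · simp only [homF, dif_pos h]
    exact (continuous_apply i).comp ((continuous_apply _).comp hφ)
  · simp only [homF, dif_neg h]
    by_cases hsx : (s : α) = x
    · simp only [if_pos hsx]
      by_cases hi : (i : ℕ) = 0
      · simp only [if_pos hi]
        exact (hM.add continuous_const).sub (hcos.div_const 2)
      · simp only [if_neg hi]
        by_cases hi1 : (i : ℕ) = 1
        · simp only [if_pos hi1]; exact (hsin.div_const 2).neg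
        · simp only [if_neg hi1]; exact continuous_const
    · simp only [if_neg hsx]
      by_cases hi : (i : ℕ) = 0
      · simp only [if_pos hi]
        exact (hM.add continuous_const).add (hcos.div_const 2)
      · simp only [if_neg hi]
        by_cases hi1 : (i : ℕ) = 1
        · simp only [if_pos hi1]; exact hsin.div_const 2
        · simp only [if_neg hi1]; exact continuous_const

set_option maxHeartbeats 1000000 in
theorem stmt3 {α : Type*} [DecidableEq α] (r n : ℕ) (hr : 2 ≤ r) (hn : 2 ≤ n)
    (T : Finset α) (x y : α) (hxy : x ≠ y) (hx : x ∉ T) (hy : y ∉ T) :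
    ∃ s₁ s₂ : C(RConf r n T, RConf r n (insert y (insert x T))),
      (∀ f : RConf r n T, ∀ t : ↥(insert y (insert x T)),
        (s₁ f).1 t = stabExt n (insert x T) y (stabExt n T x f.1) t) ∧
      (∀ f : RConf r n T, ∀ t : ↥(insert y (insert x T)),
        (s₂ f).1 t = stabExt n (insert y T) x (stabExt n T y f.1)
          ⟨t, by have := t.2; simp only [Finset.mem_insert] at this ⊢; tauto⟩) ∧
      s₁.Homotopic s₂ := by
  have hpres : ∀ (t : ℝ) (f : RConf r n T), IsRConf r (homF n T x y t f.1) :=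
    fun t f => homF_isRConf hr hn hxy hx hy t f.1 f.2
  have hcont : ∀ a : ℝ, Continuous fun f : RConf r n T =>
      (⟨homF n T x y a f.1, hpres a f⟩ : RConf r n (insert y (insert x T))) := by
    intro a
    apply Continuous.subtype_mk
    exact homF_continuous n T x y continuous_const continuous_subtype_val
  refine ⟨⟨fun f => ⟨homF n T x y 0 f.1, hpres 0 f⟩, hcont 0⟩,
    ⟨fun f => ⟨homF n T x y 1 f.1, hpres 1 f⟩, hcont 1⟩, ?_, ?_, ?_⟩
  · intro f t
    exact homF_zero n T x y hxy hx hy f.1 t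
  · intro f t
    exact homF_one n T x y hxy hx hy f.1 t _
  · refine ⟨⟨⟨fun p => ⟨homF n T x y (p.1 : ℝ) p.2.1, hpres _ p.2⟩, ?_⟩,
      fun f => rfl, fun f => rfl⟩⟩
    apply Continuous.subtype_mk
    exact homF_continuous n T x y (continuous_subtype_val.comp continuous_fst)
      (continuous_subtype_val.comp continuous_snd)
end

section
/- Let n ≥ 1, r ≥ 2 and k ≥ r. For a partition x of {1,…,k} all of whose blocks have at least r elements, let i(x) = k(n−1) + c(x)(r−n−1) ∈ ℤ. Then: (a) if r ≤ n+1, the minimum of i(x) over all such partitions x equals k(n−1) + ⌊k/r⌋(r−n−1); (b) if r ≥ n+1, the minimum equals k(n−1) + (r−n−1). In each case the minimum is attained by some such partition. -/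
open Finset

/-- The quantity `i(x) = k(n−1) + c(x)(r−n−1)`, where `c(x)` is the number of blocks of the
partition `x`, evaluated in `ℤ`. -/
def iVal (n r k : ℕ) (x : Finpartition (Finset.univ : Finset (Fin k))) : ℤ :=
  (k : ℤ) * ((n : ℤ) - 1) + (x.parts.card : ℤ) * ((r : ℤ) - (n : ℤ) - 1)

lemma exists_partition (r k : ℕ) (hr : 1 ≤ r) (hk : r ≤ k) :
    ∃ x : Finpartition (Finset.univ : Finset (Fin k)),
      (∀ B ∈ x.parts, r ≤ B.card) ∧ x.parts.card = k / r := by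
  set q := k / r with hq
  have hrpos : 0 < r := hr
  have hq1 : 1 ≤ q := (Nat.one_le_div_iff hrpos).2 hk
  have hqr : q * r ≤ k := Nat.div_mul_le_self k r
  set f : Fin k → ℕ := fun i => min (i.val / r) (q - 1) with hf
  set F : ℕ → Finset (Fin k) := fun j => Finset.univ.filter (fun i => f i = j) with hF
  -- membership characterization
  have hmemF : ∀ j (i : Fin k), i ∈ F j ↔ f i = j := by
    intro j i; simp [hF]
  -- interval inclusion
  have hlt : ∀ j, j < q → ∀ m, j * r ≤ m → m < j * r + r → m < k := by
    intro j hj m _ hm2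
    have : j * r + r ≤ q * r := by nlinarith
    omega
  have hdiv : ∀ j, j < q → ∀ m (hm : m < k), j * r ≤ m → m < j * r + r →
      (⟨m, hm⟩ : Fin k) ∈ F j := by
    intro j hj m hm h1 h2
    rw [hmemF]
    have hdj : m / r = j := by
      have hle : j ≤ m / r := (Nat.le_div_iff_mul_le hrpos).2 h1
      have hlt' : m / r < j + 1 := by
        rw [Nat.div_lt_iff_lt_mul hrpos]
        nlinarith
      omega
    simp only [hf, hdj]
    omega
  have hcardF : ∀ j, j < q → r ≤ (F j).card := by
    intro j hj
    have hsub : (Finset.Ico (j * r) (j * r + r)).attachFin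
        (fun m hm => hlt j hj m (Finset.mem_Ico.1 hm).1 (Finset.mem_Ico.1 hm).2) ⊆ F j := by
      intro i hi
      rw [Finset.mem_attachFin] at hi
      rw [Finset.mem_Ico] at hi
      have := hdiv j hj i.val i.isLt hi.1 hi.2
      simpa using this
    calc r = ((Finset.Ico (j * r) (j * r + r)).attachFin
        (fun m hm => hlt j hj m (Finset.mem_Ico.1 hm).1 (Finset.mem_Ico.1 hm).2)).card := by
          rw [Finset.card_attachFin, Nat.card_Ico]; omega
      _ ≤ (F j).card := Finset.card_le_card hsub
  have hne : ∀ j, j < q → (F j).Nonempty := by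
    intro j hj
    have : 0 < (F j).card := lt_of_lt_of_le hrpos (hcardF j hj)
    exact Finset.card_pos.1 this
  have hfval : ∀ i : Fin k, f i < q := by
    intro i
    have : f i ≤ q - 1 := min_le_right _ _
    omega
  refine ⟨⟨(Finset.range q).image F, ?_, ?_, ?_⟩, ?_, ?_⟩
  · -- supIndep
    rw [Finset.supIndep_iff_pairwiseDisjoint]
    intro a ha b hb hab
    simp only [Finset.coe_image, Finset.coe_range, Set.mem_image] at ha hb
    obtain ⟨j, hj, rfl⟩ := ha
    obtain ⟨j', hj', rfl⟩ := hb
    have hjj : j ≠ j' := fun h => hab (by rw [h])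
    simp only [Function.onFun, Finset.disjoint_left]
    intro i hi hi'
    simp only [id_eq] at hi hi'
    rw [hmemF] at hi hi'
    exact hjj (hi ▸ hi')
  · -- sup_parts
    apply Finset.Subset.antisymm
    · intro i _; exact Finset.mem_univ i
    · intro i _
      rw [Finset.mem_sup]
      refine ⟨F (f i), Finset.mem_image.2 ⟨f i, Finset.mem_range.2 (hfval i), rfl⟩, ?_⟩
      rw [id_eq, hmemF]
  · -- bot not mem
    intro hmem
    rw [Finset.bot_eq_empty, Finset.mem_image] at hmem
    obtain ⟨j, hj, hjF⟩ := hmem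
    have := hne j (Finset.mem_range.1 hj)
    rw [hjF] at this
    exact Finset.not_nonempty_empty this
  · -- all parts have card ≥ r
    intro B hB
    simp only [Finset.mem_image, Finset.mem_range] at hB
    obtain ⟨j, hj, rfl⟩ := hB
    exact hcardF j hj
  · -- card of parts = q
    rw [Finset.card_image_of_injOn, Finset.card_range]
    intro j hj j' hj' hjj
    simp only [Finset.coe_range, Set.mem_Iio] at hj hj'
    obtain ⟨i, hi⟩ := hne j hj
    have hi' : i ∈ F j' := hjj ▸ hi
    rw [hmemF] at hi hi'
    omega

theorem stmt11 (n r k : ℕ) (hn : 1 ≤ n) (hr : 2 ≤ r) (hk : r ≤ k) :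
    (r ≤ n + 1 →
      (∀ x : Finpartition (Finset.univ : Finset (Fin k)),
        (∀ B ∈ x.parts, r ≤ B.card) →
        (k : ℤ) * ((n : ℤ) - 1) + ((k / r : ℕ) : ℤ) * ((r : ℤ) - (n : ℤ) - 1) ≤ iVal n r k x) ∧
      (∃ x : Finpartition (Finset.univ : Finset (Fin k)),
        (∀ B ∈ x.parts, r ≤ B.card) ∧
        iVal n r k x =
          (k : ℤ) * ((n : ℤ) - 1) + ((k / r : ℕ) : ℤ) * ((r : ℤ) - (n : ℤ) - 1))) ∧
    (n + 1 ≤ r →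
      (∀ x : Finpartition (Finset.univ : Finset (Fin k)),
        (∀ B ∈ x.parts, r ≤ B.card) →
        (k : ℤ) * ((n : ℤ) - 1) + ((r : ℤ) - (n : ℤ) - 1) ≤ iVal n r k x) ∧
      (∃ x : Finpartition (Finset.univ : Finset (Fin k)),
        (∀ B ∈ x.parts, r ≤ B.card) ∧
        iVal n r k x = (k : ℤ) * ((n : ℤ) - 1) + ((r : ℤ) - (n : ℤ) - 1))) := by
  have hkpos : 0 < k := by omega
  have huniv_ne : (Finset.univ : Finset (Fin k)) ≠ ⊥ := by
    rw [Finset.bot_eq_empty, ← Finset.nonempty_iff_ne_empty]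
    exact ⟨⟨0, hkpos⟩, Finset.mem_univ _⟩
  -- general bounds on number of parts
  have hbounds : ∀ x : Finpartition (Finset.univ : Finset (Fin k)),
      (∀ B ∈ x.parts, r ≤ B.card) → 1 ≤ x.parts.card ∧ x.parts.card ≤ k / r := by
    intro x hx
    constructor
    · exact Finset.card_pos.2 (x.parts_nonempty huniv_ne)
    · rw [Nat.le_div_iff_mul_le (by omega : 0 < r)]
    
      have hsum : ∑ B ∈ x.parts, B.card = k := by
        rw [Finpartition.sum_card_parts, Finset.card_univ, Fintype.card_fin]
      calc x.parts.card * r = ∑ _B ∈ x.parts, r := by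
            rw [Finset.sum_const, smul_eq_mul]
        _ ≤ ∑ B ∈ x.parts, B.card := Finset.sum_le_sum hx
        _ = k := hsum
  constructor
  · intro hrn
    constructor
    · intro x hx
      obtain ⟨_, h2⟩ := hbounds x hx
      have h2' : (x.parts.card : ℤ) ≤ ((k / r : ℕ) : ℤ) := Int.ofNat_le.2 h2
      have hneg : (r : ℤ) - (n : ℤ) - 1 ≤ 0 := by
        have : (r : ℤ) ≤ (n : ℤ) + 1 := by exact_mod_cast hrn
        omega
      unfold iVal
      nlinarith
    · obtain ⟨x, hx, hcard⟩ := exists_partition r k (by omega) hk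
      exact ⟨x, hx, by unfold iVal; rw [hcard]⟩
  · intro hrn
    constructor
    · intro x hx
      obtain ⟨h1, _⟩ := hbounds x hx
      have h1' : (1 : ℤ) ≤ (x.parts.card : ℤ) := by exact_mod_cast h1
      have hpos : 0 ≤ (r : ℤ) - (n : ℤ) - 1 := by
        have : (n : ℤ) + 1 ≤ (r : ℤ) := by exact_mod_cast hrn
        omega
      unfold iVal
      nlinarith
    · refine ⟨Finpartition.indiscrete huniv_ne, ?_, ?_⟩
      · intro B hB
        simp only [Finpartition.indiscrete_parts, Finset.mem_singleton] at hB
        subst hB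
        rw [Finset.card_univ, Fintype.card_fin]
        exact hk
      · unfold iVal
        simp [Finpartition.indiscrete_parts]
end

section
/- Let r ≥ 2 and n ≥ 2 be natural numbers. Then for every natural number k, the no-r-equal configuration space rConf(k, ℝⁿ) is path-connected. -/
/-- The no-`r`-equal condition: no `r` distinct indices are mapped to the same point. -/
def IsRConfig (r : ℕ) {n k : ℕ} (v : Fin k → Fin n → ℝ) : Prop :=
  ¬∃ s : Finset (Fin k), s.card = r ∧ ∀ i ∈ s, ∀ j ∈ s, v i = v j

/-- The subspace of configurations where all coordinates indexed by `s` agree. -/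
def Wsub (n : ℕ) {k : ℕ} (s : Finset (Fin k)) : Submodule ℝ (Fin k → Fin n → ℝ) where
  carrier := {v | ∀ i ∈ s, ∀ j ∈ s, v i = v j}
  zero_mem' := by intro i _ j _; rfl
  add_mem' := by
    intro a b ha hb i hi j hj
    show a i + b i = a j + b j
    rw [ha i hi j hj, hb i hi j hj]
  smul_mem' := by
    intro c a ha i hi j hj
    show c • a i = c • a j
    rw [ha i hi j hj]

lemma Wsub_sup_ne_top {n k : ℕ} (hn : 2 ≤ n) {s : Finset (Fin k)} (hs : 2 ≤ s.card)
    (x : Fin k → Fin n → ℝ) : Wsub n s ⊔ Submodule.span ℝ {x} ≠ ⊤ := by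
  obtain ⟨i, hi, j, hj, hij⟩ := Finset.one_lt_card.mp (by omega : 1 < s.card)
  set e : Fin 2 → Fin n := Fin.castLE hn with he
  set φ : (Fin k → Fin n → ℝ) →ₗ[ℝ] (Fin 2 → ℝ) :=
    LinearMap.pi (fun m =>
      (LinearMap.proj (e m) : (Fin n → ℝ) →ₗ[ℝ] ℝ).comp
          (LinearMap.proj i : (Fin k → Fin n → ℝ) →ₗ[ℝ] (Fin n → ℝ))
        - (LinearMap.proj (e m) : (Fin n → ℝ) →ₗ[ℝ] ℝ).comp
          (LinearMap.proj j : (Fin k → Fin n → ℝ) →ₗ[ℝ] (Fin n → ℝ))) with hφ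
  have hsurj : Function.Surjective φ := by
    intro c
    refine ⟨Function.update (0 : Fin k → Fin n → ℝ) i
      (fun l => if l = e 0 then c 0 else if l = e 1 then c 1 else 0), ?_⟩
    funext m
    have hji : j ≠ i := hij.symm
    have h01 : e 1 ≠ e 0 := by
      simp only [he]
      intro h
      exact absurd (Fin.castLE_injective hn h) (by decide)
    fin_cases m <;>
      simp [hφ, Function.update_self, Function.update_of_ne hji, h01]
  have hle : Wsub n s ≤ LinearMap.ker φ := by
    intro v hv
    rw [LinearMap.mem_ker]
    funext m
    simp [hφ, congrFun (hv i hi j hj) (e m)]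
  have hrn := LinearMap.finrank_range_add_finrank_ker φ
  rw [LinearMap.range_eq_top.mpr hsurj, finrank_top] at hrn
  have h2 : Module.finrank ℝ (Fin 2 → ℝ) = 2 := by simp
  intro htop
  have h3 : Module.finrank ℝ (Fin k → Fin n → ℝ)
      ≤ Module.finrank ℝ (Wsub n s) + Module.finrank ℝ (Submodule.span ℝ {x}) := by
    calc Module.finrank ℝ (Fin k → Fin n → ℝ)
        = Module.finrank ℝ (Wsub n s ⊔ Submodule.span ℝ {x} : Submodule ℝ _) := by
          rw [htop, finrank_top]
      _ ≤ _ := Submodule.finrank_add_le_finrank_add_finrank _ _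
  have h4 : Module.finrank ℝ (Wsub n s) ≤ Module.finrank ℝ (LinearMap.ker φ) :=
    Submodule.finrank_mono hle
  have h5 : Module.finrank ℝ (Submodule.span ℝ ({x} : Set (Fin k → Fin n → ℝ))) ≤ 1 :=
    le_trans (finrank_span_le_card _) (by simp)
  omega

theorem stmt17 (r n : ℕ) (hr : 2 ≤ r) (hn : 2 ≤ n) (k : ℕ) :
    PathConnectedSpace {v : Fin k → Fin n → ℝ // IsRConfig r v} := by
  set S : Set (Fin k → Fin n → ℝ) := {v | IsRConfig r v} with hS
  -- membership in S is avoiding all Wsub of card r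
  have hmem : ∀ v, v ∈ S ↔ ∀ s : Finset (Fin k), s.card = r → v ∉ Wsub n s := by
    intro v
    constructor
    · intro hv s hsc hvs
      exact hv ⟨s, hsc, hvs⟩
    · rintro h ⟨s, hsc, hall⟩
      exact h s hsc hall
  -- a base configuration
  have hbase : (fun i _ => (i : ℝ) : Fin k → Fin n → ℝ) ∈ S := by
    rintro ⟨s, hsc, hall⟩
    have : s.card ≤ 1 := Finset.card_le_one.mpr (by
      intro a ha b hb
      have h : ((a : ℕ) : ℝ) = ((b : ℕ) : ℝ) := congrFun (hall a ha b hb) ⟨0, by omega⟩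
      exact Fin.val_injective (Nat.cast_injective h))
    omega
  -- given x z in S with z generic wrt x, the segment from x to z stays in S
  have hseg : ∀ x z : Fin k → Fin n → ℝ, x ∈ S →
      (∀ s : Finset (Fin k), s.card = r → z ∉ Wsub n s ⊔ Submodule.span ℝ {x}) →
      JoinedIn S x z := by
    intro x z hx hz
    have hzS : z ∈ S := by
      rw [hmem]
      intro s hsc hzs
      exact hz s hsc (Submodule.mem_sup_left hzs)
    have key : ∀ t : ℝ, 0 ≤ t → t ≤ 1 → (1 - t) • x + t • z ∈ S := by
      intro t ht0 ht1
      rw [hmem]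
      intro s hsc hp
      rcases eq_or_ne t 0 with rfl | htne
      · simp only [sub_zero, one_smul, zero_smul, add_zero] at hp
        exact (hmem x).mp hx s hsc hp
      · apply hz s hsc
        have hx' : x ∈ Wsub n s ⊔ Submodule.span ℝ {x} :=
          Submodule.mem_sup_right (Submodule.mem_span_singleton_self x)
        have hp' : ((1 - t) • x + t • z) ∈ Wsub n s ⊔ Submodule.span ℝ {x} :=
          Submodule.mem_sup_left hp
        have : z = t⁻¹ • (((1 - t) • x + t • z) - (1 - t) • x) := by
          rw [add_sub_cancel_left, smul_smul, inv_mul_cancel₀ htne, one_smul]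
        rw [this]
        exact Submodule.smul_mem _ _ (Submodule.sub_mem _ hp' (Submodule.smul_mem _ _ hx'))
    refine ⟨⟨⟨fun t => (1 - (t : ℝ)) • x + (t : ℝ) • z, by fun_prop⟩, by simp, by simp⟩, ?_⟩
    intro t
    exact key t t.2.1 t.2.2
  -- existence of a generic point
  have hgen : ∀ x y : Fin k → Fin n → ℝ, x ∈ S → y ∈ S →
      ∃ z, (∀ s : Finset (Fin k), s.card = r → z ∉ Wsub n s ⊔ Submodule.span ℝ {x}) ∧
           (∀ s : Finset (Fin k), s.card = r → z ∉ Wsub n s ⊔ Submodule.span ℝ {y}) := by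
    intro x y hx hy
    set p : {s : Finset (Fin k) // s.card = r} × Bool → Submodule ℝ (Fin k → Fin n → ℝ) :=
      fun q => Wsub n q.1.1 ⊔ Submodule.span ℝ {if q.2 then x else y} with hp
    have hz : ∃ z, ∀ q, z ∉ p q := by
      by_contra h
      push_neg at h
      have hcover : ⋃ q, (p q : Set (Fin k → Fin n → ℝ)) = Set.univ := by
        apply Set.eq_univ_of_forall
        intro z
        obtain ⟨q, hq⟩ := h z
        exact Set.mem_iUnion.mpr ⟨q, hq⟩
      obtain ⟨⟨⟨s, hsc⟩, b⟩, htop⟩ := Subspace.exists_eq_top_of_iUnion_eq_univ hcover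
      exact Wsub_sup_ne_top hn (show 2 ≤ s.card by omega) _ htop
    obtain ⟨z, hzq⟩ := hz
    refine ⟨z, ?_, ?_⟩
    · intro s hsc
      exact hzq (⟨s, hsc⟩, true)
    · intro s hsc
      exact hzq (⟨s, hsc⟩, false)
  refine ⟨⟨⟨_, hbase⟩⟩, ?_⟩
  rintro ⟨x, hx⟩ ⟨y, hy⟩
  obtain ⟨z, hzx, hzy⟩ := hgen x y hx hy
  exact ((hseg x z hx hzx).trans (hseg y z hy hzy).symm).joined_subtype
end
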